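/- arXiv:1504.04599 — 9 statements merged into one kernel-verified Lean document; each statement's English description precedes it below -/
import Mathlib

section
/- Let X ~ Poisson(m₁ p) and Y ~ Poisson(m₂ q) be independent, and let W = (m₂ X - m₁ Y)² - (m₂² X + m₁² Y). Then Var[W] = 2 m₁² m₂² z² + 4 m₁³ m₂³ z (p - q)², where z = m₂ p + m₁ q. -/
open scoped BigOperators
open Real

/-- Poisson pmf with rate `lam` at `k`. -/
noncomputable def pp (lam : ℝ) (k : ℕ) : ℝ := Real.exp (-lam) * lam ^ k / (Nat.factorial k)

/-!
The Poisson factorial moments are `E[X(X-1)⋯(X-r+1)] = λ ^ r`, so for a quadratic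
`g x = c₂ x(x-1) + c₁ x + c₀` in the falling-factorial basis both `E[g X]` and `E[(g X)²]`
are explicit. Since `W = m₂² X(X-1) - 2 m₁ m₂ X Y + m₁² Y(Y-1)`, conditionally on `X = k` the
statistic is such a quadratic in `Y`; its conditional mean is again such a quadratic in `k`, and
its conditional second moment is the square of that quadratic plus a third one (the conditional
variance). Applying the two formulas once more, now in `X`, gives with `a = m₁ p`, `b = m₂ q`
`E[W] = (m₂ a - m₁ b)²` and `Var[W] = 2 (m₂² a + m₁² b)² + 4 (m₂² a + m₁² b) (m₂ a - m₁ b)²`.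
-/

open Polynomial

lemma hasSum_pp (lam : ℝ) : HasSum (pp lam) 1 := by
  have h := (NormedSpace.expSeries_div_hasSum_exp lam).mul_left (exp (-lam))
  rw [← Real.exp_eq_exp_ℝ, ← exp_add, neg_add_cancel, exp_zero] at h
  exact h.congr_fun fun k => mul_div_assoc _ _ _

lemma pp_add_mul_descFactorial (lam : ℝ) (n r : ℕ) :
    pp lam (n + r) * (n + r).descFactorial r = lam ^ r * pp lam n := by
  have h := Nat.factorial_mul_descFactorial (Nat.le_add_left r n)
  rw [Nat.add_sub_cancel] at h
  have hn : (n.factorial : ℝ) ≠ 0 := by positivity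
  have hr : ((n + r).descFactorial r : ℝ) ≠ 0 := by
    exact_mod_cast (Nat.descFactorial_pos.2 le_add_self).ne'
  simp only [pp, ← h, Nat.cast_mul]
  field_simp
  ring

lemma hasSum_pp_mul_descPochhammer_eval (lam : ℝ) (r : ℕ) :
    HasSum (fun k : ℕ => pp lam k * (descPochhammer ℝ r).eval (k : ℝ)) (lam ^ r) := by
  simp only [descPochhammer_eval_eq_descFactorial]
  rw [← hasSum_nat_add_iff' r]
  have hlow : ∑ k ∈ Finset.range r, pp lam k * k.descFactorial r = 0 :=
    Finset.sum_eq_zero fun k hk => by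
      rw [Nat.descFactorial_eq_zero_iff_lt.2 (Finset.mem_range.1 hk), Nat.cast_zero, mul_zero]
  simp only [hlow, sub_zero, pp_add_mul_descFactorial]
  simpa only [mul_one] using (hasSum_pp lam).mul_left (lam ^ r)

lemma hasSum_pp_mul_quadratic (lam c₂ c₁ c₀ : ℝ) :
    HasSum (fun k : ℕ => pp lam k * (c₂ * (k * (k - 1)) + c₁ * k + c₀))
      (c₂ * lam ^ 2 + c₁ * lam + c₀) := by
  have H r := hasSum_pp_mul_descPochhammer_eval lam r
  convert! (((H 2).mul_left c₂).add ((H 1).mul_left c₁)).add ((H 0).mul_left c₀) using 1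
  · ext k
    simp only [descPochhammer_succ_right, descPochhammer_zero, CharP.cast_eq_zero, sub_zero,
      one_mul, Nat.cast_one, eval_mul, eval_X, eval_sub, eval_one, mul_one]
    ring
  · ring

lemma hasSum_pp_mul_quadratic_sq (lam c₂ c₁ c₀ : ℝ) :
    HasSum (fun k : ℕ => pp lam k * (c₂ * (k * (k - 1)) + c₁ * k + c₀) ^ 2)
      ((c₂ * lam ^ 2 + c₁ * lam + c₀) ^ 2
        + (2 * c₂ ^ 2 * lam ^ 2 * (2 * lam + 1) + 4 * c₂ * c₁ * lam ^ 2 + c₁ ^ 2 * lam)) := by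
  have H r := hasSum_pp_mul_descPochhammer_eval lam r
  -- with `x₍ᵣ₎ = x(x-1)⋯(x-r+1)`: `x₍₂₎² = x₍₄₎ + 4x₍₃₎ + 2x₍₂₎`, `x₍₂₎x = x₍₃₎ + 2x₍₂₎`, `x² = x₍₂₎ + x`
  convert! (((((H 4).mul_left (c₂ ^ 2)).add ((H 3).mul_left (4 * c₂ ^ 2 + 2 * c₂ * c₁))).add
    ((H 2).mul_left (2 * c₂ ^ 2 + 4 * c₂ * c₁ + c₁ ^ 2 + 2 * c₂ * c₀))).add
    ((H 1).mul_left (c₁ ^ 2 + 2 * c₁ * c₀))).add ((H 0).mul_left (c₀ ^ 2)) using 1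
  · ext k
    simp only [descPochhammer_succ_right, descPochhammer_zero, CharP.cast_eq_zero, sub_zero,
      one_mul, Nat.cast_one, Nat.cast_ofNat, eval_mul, eval_X, eval_sub, eval_one, eval_ofNat,
      mul_one]
    ring
  · ring

lemma hasSum_pp_mul_pp_mul_statistic (a b m₁ m₂ : ℝ) (k : ℕ) :
    HasSum (fun l : ℕ => pp a k * pp b l * ((m₂ * k - m₁ * l) ^ 2 - (m₂ ^ 2 * k + m₁ ^ 2 * l)))
      (pp a k * (m₂ ^ 2 * (k * (k - 1)) + (-2 * m₁ * m₂ * b) * k + m₁ ^ 2 * b ^ 2)) := by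
  convert! (hasSum_pp_mul_quadratic b (m₁ ^ 2) (-2 * m₁ * m₂ * k)
    (m₂ ^ 2 * (k * (k - 1)))).mul_left (pp a k) using 1
  · ext l
    ring
  · ring

lemma hasSum_pp_mul_pp_mul_statistic_sq (a b m₁ m₂ : ℝ) (k : ℕ) :
    HasSum (fun l : ℕ => pp a k * pp b l * ((m₂ * k - m₁ * l) ^ 2 - (m₂ ^ 2 * k + m₁ ^ 2 * l)) ^ 2)
      (pp a k * ((m₂ ^ 2 * (k * (k - 1)) + (-2 * m₁ * m₂ * b) * k + m₁ ^ 2 * b ^ 2) ^ 2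
        + ((4 * m₁ ^ 2 * m₂ ^ 2 * b) * (k * (k - 1))
          + (4 * m₁ ^ 2 * m₂ ^ 2 * b - 8 * m₁ ^ 3 * m₂ * b ^ 2) * k
          + 2 * m₁ ^ 4 * b ^ 2 * (2 * b + 1)))) := by
  convert! (hasSum_pp_mul_quadratic_sq b (m₁ ^ 2) (-2 * m₁ * m₂ * k)
    (m₂ ^ 2 * (k * (k - 1)))).mul_left (pp a k) using 1
  · ext l
    ring
  · ring

lemma tsum_tsum_pp_mul_pp_mul_statistic (a b m₁ m₂ : ℝ) :
    ∑' k : ℕ, ∑' l : ℕ, pp a k * pp b l * ((m₂ * k - m₁ * l) ^ 2 - (m₂ ^ 2 * k + m₁ ^ 2 * l))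
      = (m₂ * a - m₁ * b) ^ 2 := by
  rw [tsum_congr fun k => (hasSum_pp_mul_pp_mul_statistic a b m₁ m₂ k).tsum_eq,
    (hasSum_pp_mul_quadratic a _ _ _).tsum_eq]
  ring

lemma tsum_tsum_pp_mul_pp_mul_statistic_sq (a b m₁ m₂ : ℝ) :
    ∑' k : ℕ, ∑' l : ℕ, pp a k * pp b l * ((m₂ * k - m₁ * l) ^ 2 - (m₂ ^ 2 * k + m₁ ^ 2 * l)) ^ 2
      = (m₂ * a - m₁ * b) ^ 4 + 2 * (m₂ ^ 2 * a + m₁ ^ 2 * b) ^ 2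
        + 4 * (m₂ ^ 2 * a + m₁ ^ 2 * b) * (m₂ * a - m₁ * b) ^ 2 := by
  rw [tsum_congr fun k => (hasSum_pp_mul_pp_mul_statistic_sq a b m₁ m₂ k).tsum_eq,
    (((hasSum_pp_mul_quadratic_sq a _ _ _).add (hasSum_pp_mul_quadratic a _ _ _)).congr_fun
      fun k => mul_add _ _ _).tsum_eq]
  ring

theorem stmt_3_general (m₁ m₂ p q : ℝ) :
    (∑' k : ℕ, ∑' l : ℕ, pp (m₁ * p) k * pp (m₂ * q) l *
        ((m₂ * k - m₁ * l) ^ 2 - (m₂ ^ 2 * k + m₁ ^ 2 * l)) ^ 2) -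
      (∑' k : ℕ, ∑' l : ℕ, pp (m₁ * p) k * pp (m₂ * q) l *
        ((m₂ * k - m₁ * l) ^ 2 - (m₂ ^ 2 * k + m₁ ^ 2 * l))) ^ 2 =
    2 * m₁ ^ 2 * m₂ ^ 2 * (m₂ * p + m₁ * q) ^ 2 +
      4 * m₁ ^ 3 * m₂ ^ 3 * (m₂ * p + m₁ * q) * (p - q) ^ 2 := by
  rw [tsum_tsum_pp_mul_pp_mul_statistic_sq, tsum_tsum_pp_mul_pp_mul_statistic]
  ring

theorem stmt_3 (m₁ m₂ p q : ℝ) (hm₁ : 0 < m₁) (hm₂ : 0 < m₂)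
    (hp : 0 ≤ p) (hq : 0 ≤ q) :
    (∑' k : ℕ, ∑' l : ℕ, pp (m₁ * p) k * pp (m₂ * q) l *
        ((m₂ * k - m₁ * l) ^ 2 - (m₂ ^ 2 * k + m₁ ^ 2 * l)) ^ 2) -
      (∑' k : ℕ, ∑' l : ℕ, pp (m₁ * p) k * pp (m₂ * q) l *
        ((m₂ * k - m₁ * l) ^ 2 - (m₂ ^ 2 * k + m₁ ^ 2 * l))) ^ 2 =
    2 * m₁ ^ 2 * m₂ ^ 2 * (m₂ * p + m₁ * q) ^ 2 +
      4 * m₁ ^ 3 * m₂ ^ 3 * (m₂ * p + m₁ * q) * (p - q) ^ 2 :=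
  stmt_3_general m₁ m₂ p q
end

section
/- Let X ~ Poisson(m₁ p) and Y ~ Poisson(m₂ q) be independent with m₁, m₂ > 0 and p, q ≥ 0, and let V = |X/m₁ - Y/m₂|. Then |p - q| ≤ E[V] ≤ |p - q| + (p/m₁ + q/m₂)^{1/2}. -/
open scoped BigOperators
open Real

lemma pp_nonneg {a : ℝ} (ha : 0 ≤ a) (k : ℕ) : 0 ≤ pp a k := by
  unfold pp
  positivity

lemma summable_pp (a : ℝ) : Summable (pp a) := by
  have h := (Real.summable_pow_div_factorial a).mul_left (Real.exp (-a))
  refine h.congr fun k => ?_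
  unfold pp; ring


lemma tsum_pp' (a : ℝ) : ∑' k, pp a k = 1 := by
  have h1 : ∑' k : ℕ, a ^ k / (Nat.factorial k : ℝ) = Real.exp a := by
    rw [Real.exp_eq_exp_ℝ, NormedSpace.exp_eq_tsum_div]
  have : (fun k => pp a k) = fun k => Real.exp (-a) * (a ^ k / (Nat.factorial k)) := by
    funext k; unfold pp; ring
  rw [this, tsum_mul_left, h1, ← Real.exp_add]
  simp

lemma pp_succ (a : ℝ) (k : ℕ) : ((k:ℝ) + 1) * pp a (k+1) = a * pp a k := by
  unfold pp
  rw [Nat.factorial_succ, pow_succ]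
  push_cast
  have h1 : (Nat.factorial k : ℝ) ≠ 0 := Nat.cast_ne_zero.2 (Nat.factorial_ne_zero k)
  have h2 : ((k:ℝ) + 1) ≠ 0 := by positivity
  field_simp

lemma summable_k_pp (a : ℝ) : Summable (fun k : ℕ => (k:ℝ) * pp a k) := by
  rw [← summable_nat_add_iff 1]
  refine ((summable_pp a).mul_left a).congr fun k => ?_
  push_cast
  rw [pp_succ]

lemma tsum_k_pp (a : ℝ) : ∑' k : ℕ, (k:ℝ) * pp a k = a := by
  rw [Summable.tsum_eq_zero_add (summable_k_pp a)]
  simp only [Nat.cast_zero, zero_mul, zero_add]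
  have : (fun k : ℕ => ((k:ℕ)+1 : ℝ) * pp a (k+1)) = fun k => a * pp a k := by
    funext k; exact_mod_cast pp_succ a k
  calc ∑' k : ℕ, ((k+1 : ℕ) : ℝ) * pp a (k+1) = ∑' k : ℕ, a * pp a k := by
        refine tsum_congr fun k => ?_; push_cast; rw [pp_succ]
    _ = a := by rw [tsum_mul_left, tsum_pp']; ring

lemma summable_k2_pp (a : ℝ) : Summable (fun k : ℕ => (k:ℝ)^2 * pp a k) := by
  have h : Summable (fun k : ℕ => (k:ℝ)*((k:ℝ)-1) * pp a k) := by
    rw [← summable_nat_add_iff 2]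
    refine (((summable_pp a).mul_left a).mul_left a).congr fun k => ?_
    push_cast [Nat.cast_add]
    have h1 : ((k:ℝ) + 2) * pp a (k+2) = a * pp a (k+1) := by
      have := pp_succ a (k+1); push_cast at this; linarith [this]
    have h2 := pp_succ a k
    push_cast [Nat.cast_add]
    linear_combination (-((k:ℝ)+1)) * h1 - a * h2
  refine (h.add (summable_k_pp a)).congr fun k => ?_
  ring

lemma tsum_k2_pp (a : ℝ) : ∑' k : ℕ, (k:ℝ)^2 * pp a k = a^2 + a := by
  have hsq : Summable (fun k : ℕ => (k:ℝ)*((k:ℝ)-1) * pp a k) := by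
    refine ((summable_k2_pp a).sub (summable_k_pp a)).congr fun k => ?_
    ring
  have key : ∀ k : ℕ, ((k:ℝ)+1+1)*((k:ℝ)+1+1-1) * pp a (k+1+1) = a^2 * pp a k := by
    intro k
    have h1 : ((k:ℝ) + 2) * pp a (k+2) = a * pp a (k+1) := by
      have := pp_succ a (k+1); push_cast at this; linarith [this]
    have h2 := pp_succ a k
    linear_combination ((k:ℝ)+1) * h1 + a * h2
  have h2 : ∑' k : ℕ, (k:ℝ)*((k:ℝ)-1) * pp a k = a^2 := by
    rw [Summable.tsum_eq_zero_add hsq, Summable.tsum_eq_zero_add ((summable_nat_add_iff 1).mpr hsq)]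
    push_cast [Nat.cast_add]
    rw [tsum_congr key, tsum_mul_left, tsum_pp']
    ring
  have heq : (fun k : ℕ => (k:ℝ)^2 * pp a k) = fun k : ℕ => (k:ℝ)*((k:ℝ)-1) * pp a k + (k:ℝ) * pp a k := by
    funext k; ring
  rw [heq, Summable.tsum_add hsq (summable_k_pp a), h2, tsum_k_pp]

lemma summable_quad (a c₀ c₁ c₂ : ℝ) :
    Summable (fun k : ℕ => pp a k * (c₂*(k:ℝ)^2 + c₁*(k:ℝ) + c₀)) := by
  have h : Summable (fun k : ℕ => c₂*((k:ℝ)^2*pp a k) + (c₁*((k:ℝ)*pp a k) + c₀*pp a k)) :=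
    ((summable_k2_pp a).mul_left _).add (((summable_k_pp a).mul_left _).add ((summable_pp a).mul_left _))
  refine h.congr fun k => ?_
  ring

lemma tsum_quad (a c₀ c₁ c₂ : ℝ) :
    ∑' k : ℕ, pp a k * (c₂*(k:ℝ)^2 + c₁*(k:ℝ) + c₀) = c₂*(a^2+a) + c₁*a + c₀ := by
  have heq : (fun k : ℕ => pp a k * (c₂*(k:ℝ)^2 + c₁*(k:ℝ) + c₀))
      = fun k : ℕ => c₂*((k:ℝ)^2*pp a k) + (c₁*((k:ℝ)*pp a k) + c₀*pp a k) := by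
    funext k; ring
  rw [heq, Summable.tsum_add ((summable_k2_pp a).mul_left _)
      (((summable_k_pp a).mul_left _).add ((summable_pp a).mul_left _)),
    Summable.tsum_add ((summable_k_pp a).mul_left _) ((summable_pp a).mul_left _),
    tsum_mul_left, tsum_mul_left, tsum_mul_left, tsum_k2_pp, tsum_k_pp, tsum_pp']
  ring

lemma abs_lin_bound (c e : ℝ) (k : ℕ) : |c + e * (k:ℝ)| ≤ 0*(k:ℝ)^2 + |e| * (k:ℝ) + |c| := by
  calc |c + e * (k:ℝ)| ≤ |c| + |e * (k:ℝ)| := abs_add_le _ _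
    _ = |c| + |e| * (k:ℝ) := by rw [abs_mul, Nat.abs_cast]
    _ = 0*(k:ℝ)^2 + |e| * (k:ℝ) + |c| := by ring

lemma summable_abs_lin {a : ℝ} (ha : 0 ≤ a) (c e : ℝ) :
    Summable (fun k : ℕ => pp a k * |c + e * (k:ℝ)|) := by
  refine Summable.of_nonneg_of_le (fun k => mul_nonneg (pp_nonneg ha k) (abs_nonneg _))
    (fun k => mul_le_mul_of_nonneg_left (abs_lin_bound c e k) (pp_nonneg ha k))
    (summable_quad a |c| |e| 0)

lemma tsum_abs_lin_le {a : ℝ} (ha : 0 ≤ a) (c e : ℝ) :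
    ∑' k : ℕ, pp a k * |c + e * (k:ℝ)| ≤ |c| + |e| * a := by
  have h := Summable.tsum_le_tsum
    (fun k => mul_le_mul_of_nonneg_left (abs_lin_bound c e k) (pp_nonneg ha k))
    (summable_abs_lin ha c e) (summable_quad a |c| |e| 0)
  rw [tsum_quad] at h
  linarith

lemma abs_tsum_le {f : ℕ → ℝ} (h : Summable (fun k => |f k|)) : |∑' k, f k| ≤ ∑' k, |f k| := by
  have h' : Summable (fun k => ‖f k‖) := by simpa only [Real.norm_eq_abs] using h
  have h2 := norm_tsum_le_tsum_norm (f := f) h'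
  simpa only [Real.norm_eq_abs] using h2

lemma abs_le_quad {z t : ℝ} (ht : 0 < t) : |z| ≤ (z^2 + t^2)/(2*t) := by
  rw [le_div_iff₀ (by positivity)]
  nlinarith [sq_nonneg (|z| - t), sq_abs z]

set_option maxHeartbeats 2000000 in
theorem stmt_4 (m₁ m₂ p q : ℝ) (hm₁ : 0 < m₁) (hm₂ : 0 < m₂)
    (hp : 0 ≤ p) (hq : 0 ≤ q) :
    |p - q| ≤ (∑' k : ℕ, ∑' l : ℕ, pp (m₁ * p) k * pp (m₂ * q) l *
        |(k : ℝ) / m₁ - (l : ℝ) / m₂|) ∧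
    (∑' k : ℕ, ∑' l : ℕ, pp (m₁ * p) k * pp (m₂ * q) l *
        |(k : ℝ) / m₁ - (l : ℝ) / m₂|) ≤
      |p - q| + Real.sqrt (p / m₁ + q / m₂) := by
  set a := m₁ * p with hadef
  set b := m₂ * q with hbdef
  have ha : 0 ≤ a := mul_nonneg hm₁.le hp
  have hb : 0 ≤ b := mul_nonneg hm₂.le hq
  have hm₁' : m₁ ≠ 0 := ne_of_gt hm₁
  have hm₂' : m₂ ≠ 0 := ne_of_gt hm₂
  set B : ℕ → ℝ := fun k => ∑' l : ℕ, pp b l * |(k:ℝ)/m₁ - (l:ℝ)/m₂| with hBdef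
  have hSrw : (∑' k : ℕ, ∑' l : ℕ, pp a k * pp b l * |(k:ℝ)/m₁ - (l:ℝ)/m₂|)
      = ∑' k : ℕ, pp a k * B k := by
    refine tsum_congr fun k => ?_
    calc ∑' l : ℕ, pp a k * pp b l * |(k:ℝ)/m₁ - (l:ℝ)/m₂|
        = ∑' l : ℕ, pp a k * (pp b l * |(k:ℝ)/m₁ - (l:ℝ)/m₂|) :=
          tsum_congr fun l => mul_assoc _ _ _
      _ = pp a k * B k := tsum_mul_left
  -- linear-form rewrites
  have habs1 : ∀ k : ℕ, (fun l : ℕ => pp b l * |(k:ℝ)/m₁ - (l:ℝ)/m₂|)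
      = fun l : ℕ => pp b l * |((k:ℝ)/m₁) + (-1/m₂) * (l:ℝ)| := by
    intro k; funext l; congr 2; ring
  have habs2 : ∀ k : ℕ, (fun l : ℕ => pp b l * |(k:ℝ)/m₁ - (l:ℝ)/m₂ - (p - q)|)
      = fun l : ℕ => pp b l * |((k:ℝ)/m₁ - (p - q)) + (-1/m₂) * (l:ℝ)| := by
    intro k; funext l; congr 2; ring
  have hBsum : ∀ k : ℕ, Summable (fun l : ℕ => pp b l * |(k:ℝ)/m₁ - (l:ℝ)/m₂|) := by
    intro k; rw [habs1 k]; exact summable_abs_lin hb _ _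
  have hqb : b/m₂ = q := by rw [hbdef]; field_simp
  have hpa : a/m₁ = p := by rw [hadef]; field_simp
  have hBnn : ∀ k : ℕ, 0 ≤ B k :=
    fun k => tsum_nonneg fun l => mul_nonneg (pp_nonneg hb l) (abs_nonneg _)
  have hBle : ∀ k : ℕ, B k ≤ (k:ℝ)/m₁ + q := by
    intro k
    have h := tsum_abs_lin_le hb ((k:ℝ)/m₁) (-1/m₂)
    rw [hBdef]
    simp only [habs1 k] at *
    refine h.trans (le_of_eq ?_)
    rw [abs_of_nonneg (by positivity : (0:ℝ) ≤ (k:ℝ)/m₁)]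
    rw [show |(-1/m₂ : ℝ)| = 1/m₂ by rw [abs_div, abs_neg, abs_one, abs_of_pos hm₂]]
    rw [show (1/m₂) * b = b/m₂ by ring, hqb]
  have hSsum : Summable (fun k : ℕ => pp a k * B k) := by
    refine Summable.of_nonneg_of_le
      (fun k => mul_nonneg (pp_nonneg ha k) (hBnn k))
      (fun k => mul_le_mul_of_nonneg_left (hBle k) (pp_nonneg ha k)) ?_
    refine (summable_quad a q (1/m₁) 0).congr fun k => ?_
    ring
  -- mean computations
  have hEk : ∀ k : ℕ, ∑' l : ℕ, pp b l * ((k:ℝ)/m₁ - (l:ℝ)/m₂) = (k:ℝ)/m₁ - q := by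
    intro k
    have heq : (fun l : ℕ => pp b l * ((k:ℝ)/m₁ - (l:ℝ)/m₂))
        = fun l : ℕ => pp b l * (0*(l:ℝ)^2 + (-1/m₂)*(l:ℝ) + (k:ℝ)/m₁) := by
      funext l; ring
    rw [heq, tsum_quad, hbdef]
    field_simp
    ring
  have hT : ∑' k : ℕ, pp a k * ((k:ℝ)/m₁ - q) = p - q := by
    have heq : (fun k : ℕ => pp a k * ((k:ℝ)/m₁ - q))
        = fun k : ℕ => pp a k * (0*(k:ℝ)^2 + (1/m₁)*(k:ℝ) + (-q)) := by
      funext k; ring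
    rw [heq, tsum_quad, hadef]
    field_simp
    ring
  -- lower bound
  have hlowabs : Summable (fun k : ℕ => pp a k * |(k:ℝ)/m₁ - q|) := by
    refine (summable_abs_lin ha (-q) (1/m₁)).congr fun k => ?_
    congr 2; ring
  have hlow : |p - q| ≤ ∑' k : ℕ, pp a k * B k := by
    rw [← hT]
    have h1 : |∑' k : ℕ, pp a k * ((k:ℝ)/m₁ - q)| ≤ ∑' k : ℕ, |pp a k * ((k:ℝ)/m₁ - q)| := by
      refine abs_tsum_le ?_
      refine hlowabs.congr fun k => ?_
      rw [abs_mul, abs_of_nonneg (pp_nonneg ha k)]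
    refine h1.trans ?_
    refine Summable.tsum_le_tsum (fun k => ?_) (by
      refine hlowabs.congr fun k => ?_
      rw [abs_mul, abs_of_nonneg (pp_nonneg ha k)]) hSsum
    rw [abs_mul, abs_of_nonneg (pp_nonneg ha k)]
    refine mul_le_mul_of_nonneg_left ?_ (pp_nonneg ha k)
    rw [← hEk k]
    refine (abs_tsum_le ?_).trans (le_of_eq (tsum_congr fun l => ?_))
    · refine (hBsum k).congr fun l => ?_
      rw [abs_mul, abs_of_nonneg (pp_nonneg hb l)]
    · rw [abs_mul, abs_of_nonneg (pp_nonneg hb l)]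
  -- upper bound
  have hσ : (0:ℝ) ≤ p/m₁ + q/m₂ := by positivity
  have hs0 : 0 ≤ Real.sqrt (p/m₁ + q/m₂) := Real.sqrt_nonneg _
  have hs2 : (Real.sqrt (p/m₁ + q/m₂))^2 = p/m₁ + q/m₂ := Real.sq_sqrt hσ
  set s := Real.sqrt (p/m₁ + q/m₂) with hsdef
  set C : ℕ → ℝ := fun k => ∑' l : ℕ, pp b l * |(k:ℝ)/m₁ - (l:ℝ)/m₂ - (p - q)| with hCdef
  have hCsum : ∀ k : ℕ, Summable (fun l : ℕ => pp b l * |(k:ℝ)/m₁ - (l:ℝ)/m₂ - (p - q)|) := by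
    intro k; rw [habs2 k]; exact summable_abs_lin hb _ _
  have hCnn : ∀ k, 0 ≤ C k :=
    fun k => tsum_nonneg fun l => mul_nonneg (pp_nonneg hb l) (abs_nonneg _)
  have hCle : ∀ k : ℕ, C k ≤ (k:ℝ)/m₁ + |p - q| + q := by
    intro k
    have h := tsum_abs_lin_le hb ((k:ℝ)/m₁ - (p - q)) (-1/m₂)
    rw [hCdef]
    simp only [habs2 k] at *
    refine h.trans ?_
    rw [show |(-1/m₂ : ℝ)| = 1/m₂ by rw [abs_div, abs_neg, abs_one, abs_of_pos hm₂],
      show (1/m₂) * b = b/m₂ by ring, hqb]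
    have habk : |(k:ℝ)/m₁ - (p - q)| ≤ (k:ℝ)/m₁ + |p - q| := by
      rw [sub_eq_add_neg]
      refine (abs_add_le _ _).trans ?_
      rw [abs_neg, abs_of_nonneg (by positivity : (0:ℝ) ≤ (k:ℝ)/m₁)]
    linarith
  have hBC : ∀ k : ℕ, B k ≤ |p - q| + C k := by
    intro k
    have hpt : ∀ l : ℕ, pp b l * |(k:ℝ)/m₁ - (l:ℝ)/m₂| ≤
        pp b l * |p - q| + pp b l * |(k:ℝ)/m₁ - (l:ℝ)/m₂ - (p - q)| := by
      intro l
      have h1 : |(k:ℝ)/m₁ - (l:ℝ)/m₂| ≤ |p - q| + |(k:ℝ)/m₁ - (l:ℝ)/m₂ - (p - q)| := by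
        have h0 := abs_add_le (p - q) ((k:ℝ)/m₁ - (l:ℝ)/m₂ - (p - q))
        rw [show (p - q) + ((k:ℝ)/m₁ - (l:ℝ)/m₂ - (p - q)) = (k:ℝ)/m₁ - (l:ℝ)/m₂ by ring] at h0
        exact h0
      nlinarith [pp_nonneg hb l, h1]
    have hsr : Summable (fun l : ℕ => pp b l * |p - q| + pp b l * |(k:ℝ)/m₁ - (l:ℝ)/m₂ - (p - q)|) :=
      ((summable_pp b).mul_right _).add (hCsum k)
    have h := Summable.tsum_le_tsum hpt (hBsum k) hsr
    rw [Summable.tsum_add ((summable_pp b).mul_right _) (hCsum k), tsum_mul_right, tsum_pp'] at h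
    simpa using h
  have hW : Summable (fun k : ℕ => pp a k * C k) := by
    refine Summable.of_nonneg_of_le
      (fun k => mul_nonneg (pp_nonneg ha k) (hCnn k))
      (fun k => mul_le_mul_of_nonneg_left (hCle k) (pp_nonneg ha k)) ?_
    refine (summable_quad a (|p - q| + q) (1/m₁) 0).congr fun k => ?_
    ring
  have hup1 : ∑' k : ℕ, pp a k * B k ≤ |p - q| + ∑' k : ℕ, pp a k * C k := by
    have hsr : Summable (fun k : ℕ => pp a k * |p - q| + pp a k * C k) :=
      ((summable_pp a).mul_right _).add hW
    have hpt : ∀ k : ℕ, pp a k * B k ≤ pp a k * |p - q| + pp a k * C k := by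
      intro k
      have := mul_le_mul_of_nonneg_left (hBC k) (pp_nonneg ha k)
      nlinarith [this]
    have h := Summable.tsum_le_tsum hpt hSsum hsr
    rw [Summable.tsum_add ((summable_pp a).mul_right _) hW, tsum_mul_right, tsum_pp'] at h
    simpa using h
  have hup2 : ∑' k : ℕ, pp a k * C k ≤ s := by
    refine le_of_forall_pos_le_add fun ε hε => ?_
    set t := s + ε with htdef
    have ht : 0 < t := add_pos_of_nonneg_of_pos hs0 hε
    have ht' : t ≠ 0 := ne_of_gt ht
    have hCt : ∀ k : ℕ, C k ≤ (((k:ℝ)/m₁ - p)^2 + q/m₂ + t^2)/(2*t) := by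
      intro k
      have hquadeq : (fun l : ℕ => pp b l * ((((k:ℝ)/m₁ - (l:ℝ)/m₂ - (p - q))^2 + t^2)/(2*t)))
          = fun l : ℕ => pp b l * ((1/(2*t*m₂^2))*(l:ℝ)^2 +
              (-(((k:ℝ)/m₁ - (p - q))/(t*m₂)))*(l:ℝ) + ((((k:ℝ)/m₁ - (p - q))^2 + t^2)/(2*t))) := by
        funext l; congr 1; field_simp; ring
      have hpt : ∀ l : ℕ, pp b l * |(k:ℝ)/m₁ - (l:ℝ)/m₂ - (p - q)| ≤
          pp b l * ((((k:ℝ)/m₁ - (l:ℝ)/m₂ - (p - q))^2 + t^2)/(2*t)) :=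
        fun l => mul_le_mul_of_nonneg_left (abs_le_quad ht) (pp_nonneg hb l)
      have hsum2 : Summable (fun l : ℕ => pp b l * ((((k:ℝ)/m₁ - (l:ℝ)/m₂ - (p - q))^2 + t^2)/(2*t))) := by
        rw [hquadeq]; exact summable_quad b _ _ _
      have h := Summable.tsum_le_tsum hpt (hCsum k) hsum2
      have hval : ∑' l : ℕ, pp b l * ((((k:ℝ)/m₁ - (l:ℝ)/m₂ - (p - q))^2 + t^2)/(2*t))
          = (((k:ℝ)/m₁ - p)^2 + q/m₂ + t^2)/(2*t) := by
        rw [hquadeq, tsum_quad, hbdef]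
        field_simp
        ring
      rw [hval] at h
      exact h
    have hquadeq2 : (fun k : ℕ => pp a k * ((((k:ℝ)/m₁ - p)^2 + q/m₂ + t^2)/(2*t)))
        = fun k : ℕ => pp a k * ((1/(2*t*m₁^2))*(k:ℝ)^2 + (-(p/(t*m₁)))*(k:ℝ) +
            ((p^2 + q/m₂ + t^2)/(2*t))) := by
      funext k; congr 1; field_simp; ring
    have hsum3 : Summable (fun k : ℕ => pp a k * ((((k:ℝ)/m₁ - p)^2 + q/m₂ + t^2)/(2*t))) := by
      rw [hquadeq2]; exact summable_quad a _ _ _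
    have h := Summable.tsum_le_tsum (fun k => mul_le_mul_of_nonneg_left (hCt k) (pp_nonneg ha k)) hW hsum3
    have hval2 : ∑' k : ℕ, pp a k * ((((k:ℝ)/m₁ - p)^2 + q/m₂ + t^2)/(2*t))
        = (p/m₁ + q/m₂ + t^2)/(2*t) := by
      rw [hquadeq2, tsum_quad, hadef]
      field_simp
      ring
    rw [hval2] at h
    refine h.trans ?_
    rw [div_le_iff₀ (by positivity)]
    rw [htdef]
    nlinarith [hs2, hs0, hε]
  constructor
  · rw [hSrw]; exact hlow
  · rw [hSrw]
    exact hup1.trans (by linarith)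
end

section
/- Let p = (p₁,…,p_n) and q = (q₁,…,q_n) be probability vectors, m₁, m₂ > 0, and for each i let X_i ~ Poisson(m₁ p_i), Y_i ~ Poisson(m₂ q_i) be mutually independent. Let V_A = Σ_{i∈A} |X_i/m₁ - Y_i/m₂| for A ⊆ [n]. Then Var[V_A] ≤ 1/m₁ + 1/m₂. -/
/-!
Var |Z| ≤ Var Z for any square-integrable Z, because E|Z| ≥ |E Z| while E|Z|² = E Z².
Hence the i-th summand of V_A has variance at most
Var(X_i/m₁ - Y_i/m₂) = m₁p_i/m₁² + m₂q_i/m₂² = p_i/m₁ + q_i/m₂, the Poisson variance being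
its mean. The summands are independent, so their variances add, and summing over A ⊆ [n]
gives at most 1/m₁ + 1/m₂.
-/

open scoped BigOperators
open MeasureTheory ProbabilityTheory

open scoped NNReal Nat
open Real

namespace ProbabilityTheory

lemma poisson_weight_succ_mul (r : ℝ≥0) (n : ℕ) :
    exp (-r) * r ^ (n + 1) / (n + 1)! * ((n + 1 : ℕ) : ℝ) = r * (exp (-r) * r ^ n / n !) := by
  rw [Nat.factorial_succ]
  push_cast
  field_simp
  ring

lemma hasSum_poisson_weight_mul_natCast (r : ℝ≥0) :
    HasSum (fun n : ℕ => exp (-r) * r ^ n / n ! * n) r := by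
  refine (hasSum_nat_add_iff' 1).mp ?_
  simp only [poisson_weight_succ_mul]
  simpa using (hasSum_one_poissonMeasure r).mul_left (r : ℝ)

lemma hasSum_poisson_weight_mul_natCast_sq (r : ℝ≥0) :
    HasSum (fun n : ℕ => exp (-r) * r ^ n / n ! * (n : ℝ) ^ 2) (r + r ^ 2) := by
  have hshift (n : ℕ) : exp (-r) * r ^ (n + 1) / (n + 1)! * ((n + 1 : ℕ) : ℝ) ^ 2 =
      r * (exp (-r) * r ^ n / n ! * n) + r * (exp (-r) * r ^ n / n !) := by
    rw [sq, ← mul_assoc, poisson_weight_succ_mul, Nat.cast_succ]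
    ring
  have h := (hasSum_nat_add_iff (f := fun n : ℕ => exp (-r) * r ^ n / n ! * (n : ℝ) ^ 2) 1).mp
    ((((hasSum_poisson_weight_mul_natCast r).mul_left (r : ℝ)).add
      ((hasSum_one_poissonMeasure r).mul_left (r : ℝ))).congr_fun hshift)
  rwa [show (r : ℝ) * r + r * 1 + ∑ i ∈ Finset.range 1, exp (-r) * r ^ i / i ! * (i : ℝ) ^ 2 =
    r + r ^ 2 by simp; ring] at h

lemma integrable_natCast_sq_poissonMeasure (r : ℝ≥0) :
    Integrable (fun n : ℕ => (n : ℝ) ^ 2) (poissonMeasure r) := by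
  rw [integrable_poissonMeasure_iff]
  simpa using (hasSum_poisson_weight_mul_natCast_sq r).summable

lemma memLp_natCast_poissonMeasure (r : ℝ≥0) :
    MemLp (fun n : ℕ => (n : ℝ)) 2 (poissonMeasure r) :=
  (memLp_two_iff_integrable_sq (by fun_prop)).2 (integrable_natCast_sq_poissonMeasure r)

lemma variance_natCast_poissonMeasure (r : ℝ≥0) :
    Var[fun n : ℕ => (n : ℝ); poissonMeasure r] = r := by
  rw [variance_eq_sub (memLp_natCast_poissonMeasure r)]
  simp only [Pi.pow_def, integral_poissonMeasure, smul_eq_mul,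
    (hasSum_poisson_weight_mul_natCast r).tsum_eq, (hasSum_poisson_weight_mul_natCast_sq r).tsum_eq]
  ring

lemma variance_abs_le {Ω : Type*} {mΩ : MeasurableSpace Ω} {μ : Measure Ω}
    [IsProbabilityMeasure μ] {X : Ω → ℝ} (hX : MemLp X 2 μ) :
    Var[|X|; μ] ≤ Var[X; μ] := by
  rw [variance_eq_sub hX, variance_eq_sub hX.abs]
  have hsq : ∫ ω, (|X| ^ 2) ω ∂μ = ∫ ω, (X ^ 2) ω ∂μ := by simp [sq_abs]
  have hmean : |μ[X]| ≤ ∫ ω, |X| ω ∂μ := abs_integral_le_integral_abs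
  have hmean_sq := pow_le_pow_left₀ (abs_nonneg _) hmean 2
  rw [sq_abs] at hmean_sq
  linarith

lemma memLp_natCast_div_sub_natCast_div_poissonMeasure_prod (r s : ℝ≥0) (a b : ℝ) :
    MemLp (fun y : ℕ × ℕ => (y.1 : ℝ) / a - (y.2 : ℝ) / b) 2
      ((poissonMeasure r).prod (poissonMeasure s)) := by
  simp only [div_eq_inv_mul]
  exact (((memLp_natCast_poissonMeasure r).const_mul a⁻¹).comp_fst (poissonMeasure s)).sub
    (((memLp_natCast_poissonMeasure s).const_mul b⁻¹).comp_snd (poissonMeasure r))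

lemma variance_natCast_div_sub_natCast_div_poissonMeasure_prod (r s : ℝ≥0) (a b : ℝ) :
    Var[fun y : ℕ × ℕ => (y.1 : ℝ) / a - (y.2 : ℝ) / b;
      (poissonMeasure r).prod (poissonMeasure s)] = r / a ^ 2 + s / b ^ 2 := by
  have hX : MemLp (fun n : ℕ => a⁻¹ * n) 2 (poissonMeasure r) :=
    (memLp_natCast_poissonMeasure r).const_mul _
  have hY : MemLp (fun n : ℕ => -b⁻¹ * n) 2 (poissonMeasure s) :=
    (memLp_natCast_poissonMeasure s).const_mul _
  convert variance_add_prod hX hY using 1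
  · congr 1
    funext y
    ring
  · rw [variance_const_mul, variance_const_mul, variance_natCast_poissonMeasure,
      variance_natCast_poissonMeasure]
    ring

lemma variance_sum_pi_finset {ι : Type*} [Fintype ι] {Ω : ι → Type*}
    {mΩ : ∀ i, MeasurableSpace (Ω i)} {μ : (i : ι) → Measure (Ω i)}
    [∀ i, IsProbabilityMeasure (μ i)] {X : Π i, Ω i → ℝ} (hX : ∀ i, MemLp (X i) 2 (μ i))
    (s : Finset ι) :
    Var[fun ω => ∑ i ∈ s, X i (ω i); Measure.pi μ] = ∑ i ∈ s, Var[X i; μ i] := by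
  have hcoord (i : ι) : MeasurePreserving (fun ω : Π j, Ω j => ω i) (Measure.pi μ) (μ i) :=
    measurePreserving_eval μ i
  rw [← Finset.sum_fn, IndepFun.variance_sum]
  · exact Finset.sum_congr rfl fun i _ => (hcoord i).variance_fun_comp (hX i).aemeasurable
  · exact fun i _ => (hX i).comp_measurePreserving (hcoord i)
  · exact fun i _ j _ hij =>
      (iIndepFun_pi fun i => (hX i).aestronglyMeasurable.aemeasurable).indepFun hij


lemma variance_abs_natCast_div_sub_natCast_div_poissonMeasure_prod_le (r s : ℝ≥0) (a b : ℝ) :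
    Var[fun y : ℕ × ℕ => |(y.1 : ℝ) / a - (y.2 : ℝ) / b|;
      (poissonMeasure r).prod (poissonMeasure s)] ≤ r / a ^ 2 + s / b ^ 2 :=
  (variance_abs_le (memLp_natCast_div_sub_natCast_div_poissonMeasure_prod r s a b)).trans_eq
    (variance_natCast_div_sub_natCast_div_poissonMeasure_prod r s a b)

end ProbabilityTheory

theorem stmt_5 (n : ℕ) (p q : Fin n → ℝ) (m₁ m₂ : ℝ) (hm₁ : 0 < m₁) (hm₂ : 0 < m₂)
    (hp0 : ∀ i, 0 ≤ p i) (hq0 : ∀ i, 0 ≤ q i)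
    (hp1 : ∑ i, p i = 1) (hq1 : ∑ i, q i = 1) (A : Finset (Fin n)) :
    ProbabilityTheory.variance
      (fun ω : (Fin n → ℕ) × (Fin n → ℕ) =>
        ∑ i ∈ A, |(ω.1 i : ℝ) / m₁ - (ω.2 i : ℝ) / m₂|)
      ((MeasureTheory.Measure.pi fun i => poissonMeasure (m₁ * p i).toNNReal).prod
        (MeasureTheory.Measure.pi fun i => poissonMeasure (m₂ * q i).toNNReal)) ≤
      1 / m₁ + 1 / m₂ := by
  rw [← (measurePreserving_arrowProdEquivProdArrow ℕ ℕ (Fin n) _ _).variance_fun_comp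
    (by fun_prop)]
  simp only [MeasurableEquiv.arrowProdEquivProdArrow, Equiv.arrowProdEquivProdArrow,
    MeasurableEquiv.coe_mk, Equiv.coe_fn_mk]
  rw [variance_sum_pi_finset
    (μ := fun i => (poissonMeasure (m₁ * p i).toNNReal).prod (poissonMeasure (m₂ * q i).toNNReal))
    (X := fun _ y => |(y.1 : ℝ) / m₁ - (y.2 : ℝ) / m₂|)
    (fun _ => (memLp_natCast_div_sub_natCast_div_poissonMeasure_prod _ _ m₁ m₂).abs) A]
  have hrate {m c : ℝ} (hm : 0 < m) (hc : 0 ≤ c) : ((m * c).toNNReal : ℝ) / m ^ 2 = c / m := by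
    rw [Real.coe_toNNReal _ (mul_nonneg hm.le hc)]
    field_simp
  calc _ ≤ ∑ i ∈ A, (p i / m₁ + q i / m₂) := Finset.sum_le_sum fun i _ => by
        rw [← hrate hm₁ (hp0 i), ← hrate hm₂ (hq0 i)]
        exact variance_abs_natCast_div_sub_natCast_div_poissonMeasure_prod_le _ _ m₁ m₂
    _ ≤ ∑ i, (p i / m₁ + q i / m₂) := Finset.sum_le_sum_of_subset_of_nonneg A.subset_univ
        fun i _ _ => by have := hp0 i; have := hq0 i; positivity
    _ = 1 / m₁ + 1 / m₂ := by
        rw [Finset.sum_add_distrib, ← Finset.sum_div, ← Finset.sum_div, hp1, hq1]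
end

section
/- Let X ~ Poisson(m₁ p) and Y ~ Poisson(m₂ q) be independent with m₁p + m₂q > 0. Conditioned on X + Y = σ, the expectation of (m₂X - m₁Y)² - (m₂²X + m₁²Y) equals σ(σ-1) · (m₁m₂(q - p)/(m₁p + m₂q))². -/
/-! Conditioned on `X + Y = σ`, the Poisson weights `pp a k * pp b (σ - k)` are proportional to the
Bernstein weights `(σ choose k) r^k (1 - r)^(σ - k)` with `r = a / (a + b)`, i.e. `X` is binomial.
The quadratic is an affine combination of `X(X - 1)`, `X` and `1`, so the binomial factorial
moments `E X = σ r`, `E X(X - 1) = σ(σ - 1) r²` give `σ(σ - 1) ((m₁ + m₂) r - m₁)²`, and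
`(m₁ + m₂) r - m₁ = m₁ m₂ (p - q) / (m₁ p + m₂ q)`. -/

open scoped BigOperators
open Real

open Polynomial Finset

theorem eval_bernsteinPolynomial {R : Type*} [CommRing R] (n ν : ℕ) (x : R) :
    (bernsteinPolynomial R n ν).eval x = n.choose ν * x ^ ν * (1 - x) ^ (n - ν) := by
  simp [bernsteinPolynomial]

theorem pp_mul_pp_eq_pp_add_mul_bernstein {a b : ℝ} (hab : a + b ≠ 0) {σ k : ℕ} (hk : k ≤ σ) :
    pp a k * pp b (σ - k) = pp (a + b) σ * (bernsteinPolynomial ℝ σ k).eval (a / (a + b)) := by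
  have hfact : (σ.choose k : ℝ) * k.factorial * (σ - k).factorial = σ.factorial := by
    exact_mod_cast Nat.choose_mul_factorial_mul_factorial hk
  have hpow : (a + b) ^ σ = (a + b) ^ k * (a + b) ^ (σ - k) := by
    rw [← pow_add, Nat.add_sub_cancel' hk]
  have hb : 1 - a / (a + b) = b / (a + b) := by field_simp; ring
  have hk! := k.factorial_pos
  have hσk! := (σ - k).factorial_pos
  have hchoose := σ.choose_pos hk
  rw [eval_bernsteinPolynomial, hb, div_pow, div_pow]
  unfold pp
  rw [neg_add, exp_add, ← hfact, hpow]
  field_simp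

theorem sum_pp_mul_pp_mul_div_sum {a b : ℝ} (hab : a + b ≠ 0) (σ : ℕ) (f : ℕ → ℝ) :
    (∑ k ∈ range (σ + 1), pp a k * pp b (σ - k) * f k) / ∑ k ∈ range (σ + 1), pp a k * pp b (σ - k)
      = ∑ k ∈ range (σ + 1), (bernsteinPolynomial ℝ σ k).eval (a / (a + b)) * f k := by
  have hsplit : ∀ k ∈ range (σ + 1), pp a k * pp b (σ - k) =
      pp (a + b) σ * (bernsteinPolynomial ℝ σ k).eval (a / (a + b)) := fun k hk =>
    pp_mul_pp_eq_pp_add_mul_bernstein hab (Nat.lt_succ_iff.mp (mem_range.mp hk))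
  have hpp : pp (a + b) σ ≠ 0 := by
    have := pow_ne_zero σ hab
    unfold pp
    positivity
  rw [sum_congr rfl hsplit, ← mul_sum, ← eval_finsetSum, bernsteinPolynomial.sum, eval_one, mul_one,
    sum_congr rfl fun k hk => by rw [hsplit k hk, mul_assoc], ← mul_sum, mul_div_cancel_left₀ _ hpp]

theorem sum_eval_bernsteinPolynomial_mul_quadratic (n : ℕ) (x α β γ : ℝ) :
    ∑ k ∈ range (n + 1), (bernsteinPolynomial ℝ n k).eval x * (α * (k * (k - 1)) + β * k + γ)
      = α * (n * (n - 1)) * x ^ 2 + β * n * x + γ := by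
  have h0 := congrArg (eval x) (bernsteinPolynomial.sum ℝ n)
  have h1 := congrArg (eval x) (bernsteinPolynomial.sum_smul ℝ n)
  have h2 := congrArg (eval x) (bernsteinPolynomial.sum_mul_smul ℝ n)
  have hcast (m : ℕ) : ((m * (m - 1) : ℕ) : ℝ) = m * (m - 1) := by cases m <;> simp
  simp only [eval_finsetSum, nsmul_eq_mul, eval_mul, eval_natCast, eval_one, eval_pow, eval_X,
    hcast] at h0 h1 h2
  calc _ = α * ∑ k ∈ range (n + 1), (k * (k - 1) : ℝ) * (bernsteinPolynomial ℝ n k).eval x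
        + β * ∑ k ∈ range (n + 1), (k : ℝ) * (bernsteinPolynomial ℝ n k).eval x
        + γ * ∑ k ∈ range (n + 1), (bernsteinPolynomial ℝ n k).eval x := by
        simp only [mul_sum, ← sum_add_distrib]
        exact sum_congr rfl fun _ _ => by ring
    _ = _ := by rw [h0, h1, h2]; ring

theorem stmt_6_general (m₁ m₂ p q : ℝ) (hz : 0 < m₁ * p + m₂ * q) (σ : ℕ) :
    (∑ k ∈ Finset.range (σ + 1), pp (m₁ * p) k * pp (m₂ * q) (σ - k) *
        ((m₂ * k - m₁ * ((σ : ℝ) - k)) ^ 2 - (m₂ ^ 2 * k + m₁ ^ 2 * ((σ : ℝ) - k)))) /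
      (∑ k ∈ Finset.range (σ + 1), pp (m₁ * p) k * pp (m₂ * q) (σ - k)) =
    (σ : ℝ) * ((σ : ℝ) - 1) * (m₁ * m₂ * (q - p) / (m₁ * p + m₂ * q)) ^ 2 := by
  have hquad (k : ℕ) : (m₂ * k - m₁ * ((σ : ℝ) - k)) ^ 2 - (m₂ ^ 2 * k + m₁ ^ 2 * ((σ : ℝ) - k))
      = (m₁ + m₂) ^ 2 * (k * (k - 1)) + (-2 * m₁ * (m₁ + m₂) * (σ - 1)) * k
        + m₁ ^ 2 * (σ * (σ - 1)) := by ring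
  simp only [hquad]
  rw [sum_pp_mul_pp_mul_div_sum hz.ne', sum_eval_bernsteinPolynomial_mul_quadratic]
  field_simp
  ring

theorem stmt_6 (m₁ m₂ p q : ℝ) (hm₁ : 0 < m₁) (hm₂ : 0 < m₂)
    (hp : 0 ≤ p) (hq : 0 ≤ q) (hz : 0 < m₁ * p + m₂ * q) (σ : ℕ) :
    (∑ k ∈ Finset.range (σ + 1), pp (m₁ * p) k * pp (m₂ * q) (σ - k) *
        ((m₂ * k - m₁ * ((σ : ℝ) - k)) ^ 2 - (m₂ ^ 2 * k + m₁ ^ 2 * ((σ : ℝ) - k)))) /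
      (∑ k ∈ Finset.range (σ + 1), pp (m₁ * p) k * pp (m₂ * q) (σ - k)) =
    (σ : ℝ) * ((σ : ℝ) - 1) * (m₁ * m₂ * (q - p) / (m₁ * p + m₂ * q)) ^ 2 :=
  stmt_6_general m₁ m₂ p q hz σ
end

section
/- Let p, q be probability distributions on [n], m₁, m₂ > 0, and for i ∈ A ⊆ [n] let X_i ~ Poisson(m₁p_i), Y_i ~ Poisson(m₂q_i) be independent. Define Z_A = Σ_{i∈A} ((m₂X_i - m₁Y_i)² - (m₂²X_i + m₁²Y_i))/(X_i + Y_i) (terms with X_i + Y_i = 0 taken as 0). Then E[Z_A] ≥ m₁²m₂² (Σ_{i∈A} |p_i - q_i|)² / (4n + m₁ + m₂). -/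
open scoped BigOperators
open Real

lemma hasSum_pp_s8 {a : ℝ} (ha : 0 ≤ a) : HasSum (pp a) 1 :=
  ProbabilityTheory.hasSum_one_poissonMeasure ⟨a, ha⟩

lemma pp_succ_mul (a : ℝ) (k : ℕ) : pp a (k + 1) * (k + 1) = a * pp a k := by
  unfold pp
  rw [Nat.factorial_succ]
  push_cast
  field_simp
  ring

section PoissonPair

variable {a b : ℝ}

lemma hasSum_pp_mul_pp (ha : 0 ≤ a) (hb : 0 ≤ b) :
    HasSum (fun x : ℕ × ℕ => pp a x.1 * pp b x.2) 1 := by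
  simpa using (hasSum_pp_s8 ha).mul (hasSum_pp_s8 hb)
    ((hasSum_pp_s8 ha).summable.mul_of_nonneg (hasSum_pp_s8 hb).summable (pp_nonneg ha) (pp_nonneg hb))

lemma HasSum.pp_mul_pp_mul_fst {g : ℕ × ℕ → ℝ} {s : ℝ}
    (h : HasSum (fun x : ℕ × ℕ => pp a x.1 * pp b x.2 * g (x.1 + 1, x.2)) s) :
    HasSum (fun x : ℕ × ℕ => pp a x.1 * pp b x.2 * (x.1 * g x)) (a * s) := by
  have hinj : Function.Injective fun x : ℕ × ℕ => (x.1 + 1, x.2) := by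
    rintro ⟨k, l⟩ ⟨k', l'⟩ h
    simp_all
  rw [← hinj.hasSum_iff]
  · refine (h.mul_left a).congr_fun fun x => ?_
    simp only [Function.comp_apply, Nat.cast_succ]
    rw [← mul_assoc a, ← mul_assoc a, ← pp_succ_mul]
    ring
  · rintro ⟨_ | k, l⟩ hx
    · simp
    · exact absurd ⟨(k, l), rfl⟩ hx

lemma HasSum.pp_mul_pp_mul_snd {g : ℕ × ℕ → ℝ} {s : ℝ}
    (h : HasSum (fun x : ℕ × ℕ => pp a x.1 * pp b x.2 * g (x.1, x.2 + 1)) s) :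
    HasSum (fun x : ℕ × ℕ => pp a x.1 * pp b x.2 * (x.2 * g x)) (b * s) := by
  rw [← (Equiv.prodComm ℕ ℕ).hasSum_iff] at h ⊢
  have := HasSum.pp_mul_pp_mul_fst (a := b) (b := a) (g := g ∘ Prod.swap)
    (h.congr_fun fun x => by simp [mul_comm])
  exact this.congr_fun fun x => by simp [mul_comm]

lemma summable_pp_mul_pp_div_add_add_two (ha : 0 ≤ a) (hb : 0 ≤ b) :
    Summable fun x : ℕ × ℕ => pp a x.1 * pp b x.2 / (x.1 + x.2 + 2) := by
  refine (hasSum_pp_mul_pp ha hb).summable.of_nonneg_of_le (fun x => ?_) (fun x => ?_)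
  · have := mul_nonneg (pp_nonneg ha x.1) (pp_nonneg hb x.2)
    positivity
  · refine div_le_self (mul_nonneg (pp_nonneg ha _) (pp_nonneg hb _)) ?_
    linarith [x.1.cast_nonneg (α := ℝ), x.2.cast_nonneg (α := ℝ)]

lemma one_div_add_two_sub_le {z s : ℝ} (hz : 0 < z + 2) (hs : 0 < s + 2) :
    1 / (z + 2) - (s - z) / (z + 2) ^ 2 ≤ 1 / (s + 2) := by
  rw [div_sub_div _ _ hz.ne' (by positivity), div_le_div_iff₀ (by positivity) hs]
  nlinarith [sq_nonneg (s - z)]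

lemma one_div_add_add_two_le_tsum (ha : 0 ≤ a) (hb : 0 ≤ b) :
    1 / (a + b + 2) ≤ ∑' x : ℕ × ℕ, pp a x.1 * pp b x.2 / (x.1 + x.2 + 2) := by
  set z := a + b
  have hP := hasSum_pp_mul_pp ha hb
  have hX : HasSum (fun x : ℕ × ℕ => pp a x.1 * pp b x.2 * (x.1 * 1)) (a * 1) :=
    HasSum.pp_mul_pp_mul_fst (by simpa using hP)
  have hY : HasSum (fun x : ℕ × ℕ => pp a x.1 * pp b x.2 * (x.2 * 1)) (b * 1) :=
    HasSum.pp_mul_pp_mul_snd (by simpa using hP)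
  have hcentered : HasSum (fun x : ℕ × ℕ => pp a x.1 * pp b x.2 * (x.1 + x.2 - z)) 0 := by
    have h := (hX.add hY).sub (hP.mul_left z)
    rw [show a * 1 + b * 1 - z * 1 = 0 by ring] at h
    exact h.congr_fun fun x => by ring
  have htangent : HasSum (fun x : ℕ × ℕ => pp a x.1 * pp b x.2 *
      (1 / (z + 2) - (x.1 + x.2 - z) / (z + 2) ^ 2)) (1 / (z + 2)) := by
    have h := (hP.mul_left (1 / (z + 2))).sub (hcentered.mul_left (1 / (z + 2) ^ 2))
    rw [mul_one, mul_zero, sub_zero] at h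
    exact h.congr_fun fun x => by ring
  refine hasSum_le (fun x => ?_) htangent (summable_pp_mul_pp_div_add_add_two ha hb).hasSum
  rw [← mul_one_div (pp a x.1 * pp b x.2)]
  exact mul_le_mul_of_nonneg_left (one_div_add_two_sub_le (by positivity) (by positivity))
    (mul_nonneg (pp_nonneg ha _) (pp_nonneg hb _))

lemma hasSum_pp_mul_pp_mul_div_add (m₁ m₂ : ℝ) (ha : 0 ≤ a) (hb : 0 ≤ b) :
    HasSum (fun x : ℕ × ℕ => pp a x.1 * pp b x.2 *
        (((m₂ * x.1 - m₁ * x.2) ^ 2 - (m₂ ^ 2 * x.1 + m₁ ^ 2 * x.2)) / (x.1 + x.2)))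
      ((m₂ * a - m₁ * b) ^ 2 * ∑' x : ℕ × ℕ, pp a x.1 * pp b x.2 / (x.1 + x.2 + 2)) := by
  set D := ∑' x : ℕ × ℕ, pp a x.1 * pp b x.2 / (x.1 + x.2 + 2)
  have hD := (summable_pp_mul_pp_div_add_add_two ha hb).hasSum
  have hX : HasSum (fun x : ℕ × ℕ => pp a x.1 * pp b x.2 * (x.1 * (1 / (x.1 + 1 + x.2)))) (a * D) :=
    HasSum.pp_mul_pp_mul_fst (hD.congr_fun fun x => by push_cast; ring)
  have hY : HasSum (fun x : ℕ × ℕ => pp a x.1 * pp b x.2 * (x.2 * (1 / (x.1 + 1 + x.2)))) (b * D) :=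
    HasSum.pp_mul_pp_mul_snd (hD.congr_fun fun x => by push_cast; ring)
  have hXX : HasSum (fun x : ℕ × ℕ => pp a x.1 * pp b x.2 * (x.1 * ((x.1 - 1) / (x.1 + x.2))))
      (a * (a * D)) :=
    HasSum.pp_mul_pp_mul_fst (hX.congr_fun fun x => by push_cast; ring)
  have hYY : HasSum (fun x : ℕ × ℕ => pp a x.1 * pp b x.2 * (x.2 * ((x.2 - 1) / (x.1 + x.2))))
      (b * (b * D)) :=
    HasSum.pp_mul_pp_mul_snd (hY.congr_fun fun x => by push_cast; ring)
  have hXY : HasSum (fun x : ℕ × ℕ => pp a x.1 * pp b x.2 * (x.1 * (x.2 / (x.1 + x.2))))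
      (a * (b * D)) :=
    HasSum.pp_mul_pp_mul_fst (hY.congr_fun fun x => by push_cast; ring)
  have h := ((hXX.mul_left (m₂ ^ 2)).add (hYY.mul_left (m₁ ^ 2))).sub (hXY.mul_left (2 * m₁ * m₂))
  rw [show m₂ ^ 2 * (a * (a * D)) + m₁ ^ 2 * (b * (b * D)) - 2 * m₁ * m₂ * (a * (b * D)) =
    (m₂ * a - m₁ * b) ^ 2 * D by ring] at h
  exact h.congr_fun fun x => by ring

lemma sq_div_add_add_two_le_tsum_tsum (m₁ m₂ : ℝ) (ha : 0 ≤ a) (hb : 0 ≤ b) :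
    (m₂ * a - m₁ * b) ^ 2 / (a + b + 2) ≤
      ∑' k : ℕ, ∑' l : ℕ, pp a k * pp b l *
        (if k + l = 0 then 0 else
          ((m₂ * k - m₁ * l) ^ 2 - (m₂ ^ 2 * k + m₁ ^ 2 * l)) / ((k : ℝ) + l)) := by
  have hite : ∀ k l : ℕ, (if k + l = 0 then 0 else
      ((m₂ * k - m₁ * l) ^ 2 - (m₂ ^ 2 * k + m₁ ^ 2 * l)) / ((k : ℝ) + l)) =
      ((m₂ * k - m₁ * l) ^ 2 - (m₂ ^ 2 * k + m₁ ^ 2 * l)) / ((k : ℝ) + l) := by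
    intro k l
    -- the `if` is redundant since `x / 0 = 0`
    split_ifs with h
    · obtain ⟨rfl, rfl⟩ := Nat.add_eq_zero_iff.mp h
      simp
    · rfl
  have h := hasSum_pp_mul_pp_mul_div_add m₁ m₂ ha hb
  simp only [hite, ← h.summable.tsum_prod, h.tsum_eq]
  rw [div_eq_mul_one_div]
  exact mul_le_mul_of_nonneg_left (one_div_add_add_two_le_tsum ha hb) (sq_nonneg _)

end PoissonPair

lemma Finset.sq_sum_div_le_sum_sq_div_of_sum_le {ι : Type*} (s : Finset ι) (c w : ι → ℝ)
    (hw : ∀ i ∈ s, 0 < w i) {W : ℝ} (hW : ∑ i ∈ s, w i ≤ W) :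
    (∑ i ∈ s, c i) ^ 2 / W ≤ ∑ i ∈ s, c i ^ 2 / w i := by
  rcases s.eq_empty_or_nonempty with rfl | hs
  · simp
  · calc (∑ i ∈ s, c i) ^ 2 / W ≤ (∑ i ∈ s, c i) ^ 2 / ∑ i ∈ s, w i :=
          div_le_div_of_nonneg_left (sq_nonneg _) (Finset.sum_pos hw hs) hW
      _ ≤ ∑ i ∈ s, c i ^ 2 / w i := s.sq_sum_div_le_sum_sq_div c hw

theorem stmt_8 (n : ℕ) (p q : Fin n → ℝ) (m₁ m₂ : ℝ) (hm₁ : 0 < m₁) (hm₂ : 0 < m₂)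
    (hp0 : ∀ i, 0 ≤ p i) (hq0 : ∀ i, 0 ≤ q i)
    (hp1 : ∑ i, p i = 1) (hq1 : ∑ i, q i = 1) (A : Finset (Fin n)) :
    (∑ i ∈ A, ∑' k : ℕ, ∑' l : ℕ, pp (m₁ * p i) k * pp (m₂ * q i) l *
        (if k + l = 0 then 0 else
          ((m₂ * k - m₁ * l) ^ 2 - (m₂ ^ 2 * k + m₁ ^ 2 * l)) / ((k : ℝ) + l))) ≥
      m₁ ^ 2 * m₂ ^ 2 * (∑ i ∈ A, |p i - q i|) ^ 2 / (4 * n + m₁ + m₂) := by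
  have ha i : 0 ≤ m₁ * p i := mul_nonneg hm₁.le (hp0 i)
  have hb i : 0 ≤ m₂ * q i := mul_nonneg hm₂.le (hq0 i)
  have hpA : m₁ * ∑ i ∈ A, p i ≤ m₁ :=
    mul_le_of_le_one_right hm₁.le (hp1 ▸ A.sum_le_univ_sum_of_nonneg fun i => hp0 i)
  have hqA : m₂ * ∑ i ∈ A, q i ≤ m₂ :=
    mul_le_of_le_one_right hm₂.le (hq1 ▸ A.sum_le_univ_sum_of_nonneg fun i => hq0 i)
  have hcard : (A.card : ℝ) ≤ n := by exact_mod_cast A.card_le_univ.trans_eq (Fintype.card_fin n)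
  have hW : ∑ i ∈ A, (m₁ * p i + m₂ * q i + 2) ≤ 4 * n + m₁ + m₂ := by
    rw [Finset.sum_add_distrib, Finset.sum_add_distrib, ← Finset.mul_sum, ← Finset.mul_sum,
      Finset.sum_const, nsmul_eq_mul]
    linarith
  have hnum : m₁ ^ 2 * m₂ ^ 2 * (∑ i ∈ A, |p i - q i|) ^ 2 =
      (∑ i ∈ A, m₁ * m₂ * |p i - q i|) ^ 2 := by
    rw [← Finset.mul_sum]; ring
  rw [ge_iff_le, hnum]
  refine (A.sq_sum_div_le_sum_sq_div_of_sum_le _ _ (fun i _ => by linarith [ha i, hb i]) hW).trans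
    (Finset.sum_le_sum fun i _ => ?_)
  rw [show (m₁ * m₂ * |p i - q i|) ^ 2 = (m₂ * (m₁ * p i) - m₁ * (m₂ * q i)) ^ 2 by
    rw [mul_pow, sq_abs]; ring]
  exact sq_div_add_add_two_le_tsum_tsum m₁ m₂ (ha i) (hb i)
end

section
/- For all z > 0, it holds that z / (1 - (1 - e^{-z})/z) ≤ 2 + z; equivalently, z² ≤ (2 + z)(z - 1 + e^{-z}). -/
/-!
Expanding the right-hand side, the claim is `2 - z ≤ (2 + z) * exp (-z)`. The function
`t ↦ (2 + t) * exp (-t) + t` has derivative `1 - (1 + t) * exp (-t)`, which is nonnegative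
because `1 + t ≤ exp t`; so it is monotone and takes the value `2` at `0`.
-/

open Real

lemma one_add_mul_exp_neg_le_one (x : ℝ) : (1 + x) * exp (-x) ≤ 1 := by
  calc (1 + x) * exp (-x) ≤ exp x * exp (-x) := by
        gcongr
        linarith [add_one_le_exp x]
    _ = 1 := by rw [← exp_add, add_neg_cancel, exp_zero]

lemma hasDerivAt_two_add_mul_exp_neg_add (x : ℝ) :
    HasDerivAt (fun t => (2 + t) * exp (-t) + t) (1 - (1 + x) * exp (-x)) x := by
  have hexp : HasDerivAt (fun t => exp (-t)) (-exp (-x)) x := by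
    simpa using (hasDerivAt_neg x).exp
  exact ((((hasDerivAt_id' x).const_add 2).fun_mul hexp).fun_add (hasDerivAt_id' x)).congr_deriv
    (by ring)

lemma monotone_two_add_mul_exp_neg_add : Monotone (fun t : ℝ => (2 + t) * exp (-t) + t) :=
  monotone_of_hasDerivAt_nonneg hasDerivAt_two_add_mul_exp_neg_add
    fun x => sub_nonneg.mpr (one_add_mul_exp_neg_le_one x)

lemma two_sub_le_two_add_mul_exp_neg {x : ℝ} (hx : 0 ≤ x) : 2 - x ≤ (2 + x) * exp (-x) := by
  have := monotone_two_add_mul_exp_neg_add hx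
  simp only [add_zero, neg_zero, exp_zero, mul_one] at this
  linarith

theorem stmt_9 (z : ℝ) (hz : 0 < z) :
    z ^ 2 ≤ (2 + z) * (z - 1 + Real.exp (-z)) := by
  linear_combination two_sub_le_two_add_mul_exp_neg hz.le
end

section
/- Let X ~ Poisson(m₁ p) and Y ~ Poisson(m₂ q) be independent with m₁, m₂ > 0 and p = q > 0. Then the conditional expectation of Z = ((m₂X - m₁Y)² - (m₂²X + m₁²Y))/(X + Y) given X + Y = σ equals 0 for every σ ≥ 1. -/
/-!
With `p = q`, the product of the two Poisson weights at `(k, σ - k)` is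
`e^{-(m₁+m₂)p} p^σ / σ!` times the binomial weight `C(σ,k) m₁^k m₂^(σ-k)`, so the numerator is
a multiple of `∑ₖ C(σ,k) m₁^k m₂^(σ-k) Q(k)` for a quadratic `Q`. Writing `Q` in the falling
factorials `k(k-1)`, `k`, `1` and using the binomial factorial moments
`∑ₖ C(n,k) aᵏ bⁿ⁻ᵏ k^(j) = n^(j) aʲ (a+b)ⁿ⁻ʲ`, the three contributions cancel.
-/

open scoped BigOperators
open Real

open Finset Nat

theorem sum_choose_mul_pow_mul_descFactorial {R : Type*} [CommSemiring R] (a b : R) (n j : ℕ) :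
    ∑ k ∈ range (n + 1), (n.choose k : R) * a ^ k * b ^ (n - k) * (k.descFactorial j : R) =
      n.descFactorial j * a ^ j * (a + b) ^ (n - j) := by
  induction j generalizing n with
  | zero =>
    rw [add_pow]
    simp only [descFactorial_zero, cast_one, mul_one, one_mul, pow_zero, Nat.sub_zero]
    exact sum_congr rfl fun k _ => by ring
  | succ j ih =>
    cases n with
    | zero => simp
    | succ n =>
      rw [sum_range_succ', succ_descFactorial_succ]
      simp only [zero_descFactorial_succ, cast_zero, mul_zero, add_zero]
      have hchoose : ∀ i, ((n + 1).choose (i + 1) : R) * (i + 1) = (n + 1) * n.choose i := by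
        intro i
        have h := congrArg (Nat.cast : ℕ → R) (add_one_mul_choose_eq n i).symm
        push_cast at h
        exact h
      calc ∑ i ∈ range (n + 1), ((n + 1).choose (i + 1) : R) * a ^ (i + 1) *
            b ^ (n + 1 - (i + 1)) * ((i + 1).descFactorial (j + 1) : R)
          = ∑ i ∈ range (n + 1), ((n + 1).choose (i + 1) : R) * (i + 1) *
              (a ^ (i + 1) * b ^ (n - i) * (i.descFactorial j : R)) := by
            refine sum_congr rfl fun i _ => ?_
            rw [succ_descFactorial_succ, Nat.add_sub_add_right]
            push_cast
            ring
        _ = (n + 1) * a * ∑ i ∈ range (n + 1), (n.choose i : R) * a ^ i * b ^ (n - i) *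
              (i.descFactorial j : R) := by
            rw [mul_sum]
            refine sum_congr rfl fun i _ => ?_
            rw [hchoose]
            ring
        _ = _ := by
            rw [ih]
            push_cast
            ring

theorem sum_choose_mul_pow_mul_quadratic_eq_zero {R : Type*} [CommRing R] (a b : R) (n : ℕ) :
    ∑ k ∈ range (n + 1), (n.choose k : R) * a ^ k * b ^ (n - k) *
      ((b * k - a * (n - k)) ^ 2 - (b ^ 2 * k + a ^ 2 * (n - k))) = 0 := by
  have hsplit : ∀ k ∈ range (n + 1), (n.choose k : R) * a ^ k * b ^ (n - k) *
      ((b * k - a * (n - k)) ^ 2 - (b ^ 2 * k + a ^ 2 * (n - k))) =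
      (a + b) ^ 2 * ((n.choose k : R) * a ^ k * b ^ (n - k) * (k.descFactorial 2 : R))
        - 2 * a * (a + b) * (n - 1) *
          ((n.choose k : R) * a ^ k * b ^ (n - k) * (k.descFactorial 1 : R))
        + a ^ 2 * (n.descFactorial 2 : R) *
          ((n.choose k : R) * a ^ k * b ^ (n - k) * (k.descFactorial 0 : R)) := by
    intro k _
    simp only [cast_descFactorial_two, descFactorial_one, descFactorial_zero]
    ring
  rw [sum_congr rfl hsplit, sum_add_distrib, sum_sub_distrib, ← mul_sum, ← mul_sum, ← mul_sum]
  simp only [sum_choose_mul_pow_mul_descFactorial]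
  rcases n with _ | _ | n
  · simp
  · simp
  · simp only [cast_descFactorial_two, descFactorial_one, descFactorial_zero, Nat.sub_zero,
      show n + 2 - 1 = n + 1 by omega]
    push_cast
    ring

theorem pp_mul_pp_sub (x y : ℝ) {n k : ℕ} (hk : k ≤ n) :
    pp x k * pp y (n - k) = exp (-(x + y)) / n ! * (n.choose k * x ^ k * y ^ (n - k)) := by
  unfold pp
  rw [cast_choose ℝ hk, neg_add, exp_add]
  field_simp

theorem stmt_11_general (m₁ m₂ p q : ℝ) (hpq : p = q) (σ : ℕ) :
    (∑ k ∈ Finset.range (σ + 1), pp (m₁ * p) k * pp (m₂ * q) (σ - k) *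
        ((m₂ * k - m₁ * ((σ : ℝ) - k)) ^ 2 - (m₂ ^ 2 * k + m₁ ^ 2 * ((σ : ℝ) - k))) /
        (σ : ℝ)) /
      (∑ k ∈ Finset.range (σ + 1), pp (m₁ * p) k * pp (m₂ * q) (σ - k)) = 0 := by
  subst hpq
  have hnum : ∑ k ∈ range (σ + 1), pp (m₁ * p) k * pp (m₂ * p) (σ - k) *
        ((m₂ * k - m₁ * ((σ : ℝ) - k)) ^ 2 - (m₂ ^ 2 * k + m₁ ^ 2 * ((σ : ℝ) - k))) / σ =
      exp (-(m₁ * p + m₂ * p)) / σ ! * p ^ σ / σ *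
        ∑ k ∈ range (σ + 1), (σ.choose k : ℝ) * m₁ ^ k * m₂ ^ (σ - k) *
          ((m₂ * k - m₁ * ((σ : ℝ) - k)) ^ 2 - (m₂ ^ 2 * k + m₁ ^ 2 * ((σ : ℝ) - k))) := by
    rw [mul_sum]
    refine sum_congr rfl fun k hk => ?_
    have hkσ := mem_range_succ_iff.mp hk
    rw [pp_mul_pp_sub _ _ hkσ, mul_pow, mul_pow, ← pow_mul_pow_sub p hkσ]
    ring
  rw [hnum, sum_choose_mul_pow_mul_quadratic_eq_zero, mul_zero, zero_div]

theorem stmt_11 (m₁ m₂ p q : ℝ) (hm₁ : 0 < m₁) (hm₂ : 0 < m₂)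
    (hp : 0 < p) (hpq : p = q) (σ : ℕ) (hσ : 1 ≤ σ) :
    (∑ k ∈ Finset.range (σ + 1), pp (m₁ * p) k * pp (m₂ * q) (σ - k) *
        ((m₂ * k - m₁ * ((σ : ℝ) - k)) ^ 2 - (m₂ ^ 2 * k + m₁ ^ 2 * ((σ : ℝ) - k))) /
        (σ : ℝ)) /
      (∑ k ∈ Finset.range (σ + 1), pp (m₁ * p) k * pp (m₂ * q) (σ - k)) = 0 :=
  stmt_11_general m₁ m₂ p q hpq σ
end

section
/- Let p = q be a probability distribution on [n], m₁, m₂ > 0, and for each i ∈ A ⊆ [n] let X_i ~ Poisson(m₁p_i), Y_i ~ Poisson(m₂q_i) be independent. Then E[Σ_{i∈A} 𝟙{Y_i = 2}/(X_i + 1)] ≤ m₂²/(2 m₁). -/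
open scoped BigOperators
open Real

/-!
For a single coordinate with rates `a = m₁ pᵢ` and `b = m₂ pᵢ`, only `Y = 2` contributes, so the
expectation factors as `P(Y = 2) · E[1/(X+1)]`. Shifting the exponential series by one index gives
`E[1/(X+1)] = (1 - e^{-a})/a ≤ 1/a`, while `P(Y = 2) ≤ b²/2`. The coordinate therefore contributes
at most `(m₂²/(2m₁)) pᵢ`, and summing over `A` uses `∑_{i ∈ A} pᵢ ≤ 1`.
-/

lemma pp_nonneg_s13 {lam : ℝ} (h : 0 ≤ lam) (k : ℕ) : 0 ≤ pp lam k := by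
  unfold pp
  positivity

lemma pp_two_le {lam : ℝ} (h : 0 ≤ lam) : pp lam 2 ≤ lam ^ 2 / 2 := by
  have hexp : Real.exp (-lam) ≤ 1 := Real.exp_le_one_iff.mpr (neg_nonpos.mpr h)
  unfold pp
  rw [Nat.factorial_two, Nat.cast_ofNat]
  gcongr
  exact mul_le_of_le_one_left (sq_nonneg lam) hexp

lemma tsum_pow_succ_div_factorial (x : ℝ) :
    ∑' k : ℕ, x ^ (k + 1) / ((k + 1).factorial : ℝ) = Real.exp x - 1 := by
  rw [Real.exp_eq_exp_ℝ, NormedSpace.exp_eq_tsum_div]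
  beta_reduce
  rw [(Real.summable_pow_div_factorial x).tsum_eq_zero_add]
  simp

lemma tsum_pp_mul_one_div_succ {lam : ℝ} (h : 0 < lam) :
    ∑' k : ℕ, pp lam k * (1 / ((k : ℝ) + 1)) = (1 - Real.exp (-lam)) / lam := by
  have hterm : ∀ k : ℕ, pp lam k * (1 / ((k : ℝ) + 1))
      = Real.exp (-lam) / lam * (lam ^ (k + 1) / ((k + 1).factorial : ℝ)) := by
    intro k
    unfold pp
    rw [Nat.factorial_succ]
    push_cast
    field_simp
    ring
  rw [tsum_congr hterm, tsum_mul_left, tsum_pow_succ_div_factorial, mul_sub,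
    div_mul_eq_mul_div, ← Real.exp_add, neg_add_cancel, Real.exp_zero, sub_div, mul_one]

lemma tsum_pp_mul_one_div_succ_le {lam : ℝ} (h : 0 < lam) :
    ∑' k : ℕ, pp lam k * (1 / ((k : ℝ) + 1)) ≤ 1 / lam := by
  rw [tsum_pp_mul_one_div_succ h]
  gcongr
  linarith [Real.exp_pos (-lam)]

lemma tsum_tsum_pp_mul_ite_two (a b : ℝ) :
    ∑' k : ℕ, ∑' l : ℕ, pp a k * pp b l * (if l = 2 then 1 / ((k : ℝ) + 1) else 0)
      = pp b 2 * ∑' k : ℕ, pp a k * (1 / ((k : ℝ) + 1)) := by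
  rw [← tsum_mul_left]
  refine tsum_congr fun k => ?_
  rw [tsum_eq_single 2 fun l hl => by simp [hl]]
  simp only [if_true]
  ring

lemma tsum_tsum_pp_mul_ite_two_le {m₁ m₂ x : ℝ} (hm₁ : 0 < m₁) (hm₂ : 0 < m₂) (hx : 0 ≤ x) :
    ∑' k : ℕ, ∑' l : ℕ, pp (m₁ * x) k * pp (m₂ * x) l * (if l = 2 then 1 / ((k : ℝ) + 1) else 0)
      ≤ m₂ ^ 2 / (2 * m₁) * x := by
  rw [tsum_tsum_pp_mul_ite_two]
  rcases hx.eq_or_lt with rfl | hx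
  · simp [pp]
  have hb : 0 ≤ m₂ * x := by positivity
  calc pp (m₂ * x) 2 * ∑' k : ℕ, pp (m₁ * x) k * (1 / ((k : ℝ) + 1))
      ≤ (m₂ * x) ^ 2 / 2 * (1 / (m₁ * x)) :=
        mul_le_mul (pp_two_le hb) (tsum_pp_mul_one_div_succ_le (by positivity))
          (tsum_nonneg fun k => mul_nonneg (pp_nonneg_s13 (by positivity) k) (by positivity))
          (by positivity)
    _ = m₂ ^ 2 / (2 * m₁) * x := by field_simp

theorem stmt_13 (n : ℕ) (p q : Fin n → ℝ) (m₁ m₂ : ℝ) (hm₁ : 0 < m₁) (hm₂ : 0 < m₂)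
    (hpq : p = q) (hp0 : ∀ i, 0 ≤ p i) (hp1 : ∑ i, p i = 1) (A : Finset (Fin n)) :
    (∑ i ∈ A, ∑' k : ℕ, ∑' l : ℕ, pp (m₁ * p i) k * pp (m₂ * q i) l *
        (if l = 2 then 1 / ((k : ℝ) + 1) else 0)) ≤ m₂ ^ 2 / (2 * m₁) := by
  subst hpq
  have hA : ∑ i ∈ A, p i ≤ 1 :=
    hp1 ▸ Finset.sum_le_sum_of_subset_of_nonneg (Finset.subset_univ A) fun i _ _ => hp0 i
  calc _ ≤ ∑ i ∈ A, m₂ ^ 2 / (2 * m₁) * p i :=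
        Finset.sum_le_sum fun i _ => tsum_tsum_pp_mul_ite_two_le hm₁ hm₂ (hp0 i)
    _ = m₂ ^ 2 / (2 * m₁) * ∑ i ∈ A, p i := (Finset.mul_sum _ _ _).symm
    _ ≤ m₂ ^ 2 / (2 * m₁) := mul_le_of_le_one_right (by positivity) hA
end

section
/- Let p, q be probability distributions on [n] with ‖p - q‖₁ ≤ ε/√n for some ε > 0 with ε²m₁ ≤ Cn, and suppose (without loss of generality) that for every i, q_i ≥ 2ε/√n implies p_i ≥ q_i/2. Then Σ_{i: q_i ≥ 2p_i} m₁ q_i² = O(ε² m₁ / n) = O(1), and consequently Σ_{i=1}^n min{q_i²/p_i, m₁ q_i²} = O(1). -/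
/-!
On `G = {i | 2 p i ≤ q i}` each `q i ≤ 2 (q i - p i)`, so the `q`-mass of `G` is at most twice
`‖p - q‖₁ ≤ ε / √n`; since `q ≥ 0`, the sum of squares over `G` is at most the square of that
mass, `4 ε² / n`. Off `G` we have `q i < 2 p i`, hence `q i² / p i ≤ 2 q i`, and these terms
contribute at most `2 ∑ q i = 2`.
-/

open Finset

section

variable {ι : Type*} [Fintype ι]

lemma sum_filter_two_mul_le_le_two_mul_sum_abs_sub (p q : ι → ℝ) :
    ∑ i ∈ univ.filter (fun i => 2 * p i ≤ q i), q i ≤ 2 * ∑ i, |p i - q i| := by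
  rw [mul_sum]
  calc ∑ i ∈ univ.filter (fun i => 2 * p i ≤ q i), q i
      ≤ ∑ i ∈ univ.filter (fun i => 2 * p i ≤ q i), 2 * |p i - q i| := by
        refine sum_le_sum fun i hi => ?_
        have h2pq := (mem_filter.mp hi).2
        have := neg_abs_le (p i - q i)
        linarith
    _ ≤ ∑ i, 2 * |p i - q i| :=
        sum_le_sum_of_subset_of_nonneg (subset_univ _) fun i _ _ => by positivity

lemma sum_filter_two_mul_le_sq_le (p : ι → ℝ) {q : ι → ℝ} (hq : ∀ i, 0 ≤ q i) :
    ∑ i ∈ univ.filter (fun i => 2 * p i ≤ q i), q i ^ 2 ≤ 4 * (∑ i, |p i - q i|) ^ 2 :=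
  calc ∑ i ∈ univ.filter (fun i => 2 * p i ≤ q i), q i ^ 2
      ≤ (∑ i ∈ univ.filter (fun i => 2 * p i ≤ q i), q i) ^ 2 :=
        sum_sq_le_sq_sum_of_nonneg fun i _ => hq i
    _ ≤ (2 * ∑ i, |p i - q i|) ^ 2 := by
        gcongr
        · exact sum_nonneg fun i _ => hq i
        · exact sum_filter_two_mul_le_le_two_mul_sum_abs_sub p q
    _ = 4 * (∑ i, |p i - q i|) ^ 2 := by ring

lemma sq_div_le_two_mul_of_lt_two_mul {a b : ℝ} (ha : 0 ≤ a) (h : a < 2 * b) :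
    a ^ 2 / b ≤ 2 * a := by
  have hb : 0 < b := by linarith
  rw [div_le_iff₀ hb]
  nlinarith

lemma sum_min_sq_div_le (p : ι → ℝ) {q : ι → ℝ} (hq : ∀ i, 0 ≤ q i) (m : ℝ) :
    ∑ i, min (q i ^ 2 / p i) (m * q i ^ 2) ≤
      ∑ i ∈ univ.filter (fun i => 2 * p i ≤ q i), m * q i ^ 2 + 2 * ∑ i, q i := by
  rw [← sum_filter_add_sum_filter_not univ (fun i => 2 * p i ≤ q i), mul_sum]
  gcongr with i
  · exact min_le_right _ _
  · calc ∑ i ∈ univ.filter (fun i => ¬2 * p i ≤ q i), min (q i ^ 2 / p i) (m * q i ^ 2)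
        ≤ ∑ i ∈ univ.filter (fun i => ¬2 * p i ≤ q i), 2 * q i :=
          sum_le_sum fun i hi => (min_le_left _ _).trans <|
            sq_div_le_two_mul_of_lt_two_mul (hq i) (not_le.mp (mem_filter.mp hi).2)
      _ ≤ ∑ i, 2 * q i :=
          sum_le_sum_of_subset_of_nonneg (subset_univ _) fun i _ _ => by linarith [hq i]

end

theorem stmt_15 :
    ∃ K : ℝ, 0 < K ∧
      ∀ (n : ℕ), 0 < n → ∀ (ε m₁ C : ℝ) (p q : Fin n → ℝ),
        0 < ε → 0 < m₁ → 0 < C →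
        (∀ i, 0 ≤ p i) → (∀ i, 0 ≤ q i) →
        (∑ i, p i = 1) → (∑ i, q i = 1) →
        (∑ i, |p i - q i|) ≤ ε / Real.sqrt n →
        ε ^ 2 * m₁ ≤ C * n →
        (∀ i, 2 * ε / Real.sqrt n ≤ q i → q i / 2 ≤ p i) →
        (∑ i ∈ Finset.univ.filter (fun i => 2 * p i ≤ q i), m₁ * q i ^ 2 ≤
            K * (ε ^ 2 * m₁ / n)) ∧
        (∑ i, min (q i ^ 2 / p i) (m₁ * q i ^ 2) ≤ K * (1 + C)) := by
  refine ⟨4, by norm_num, fun n hn ε m₁ C p q _ hm _ _ hq _ hqs hL1 hεm _ => ?_⟩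
  have hn' : (0 : ℝ) < n := by exact_mod_cast hn
  have hL1_sq : (∑ i, |p i - q i|) ^ 2 ≤ ε ^ 2 / n := by
    calc (∑ i, |p i - q i|) ^ 2 ≤ (ε / Real.sqrt n) ^ 2 := by
          gcongr
      _ = ε ^ 2 / n := by rw [div_pow, Real.sq_sqrt hn'.le]
  have hG : ∑ i ∈ univ.filter (fun i => 2 * p i ≤ q i), m₁ * q i ^ 2 ≤ 4 * (ε ^ 2 * m₁ / n) :=
    calc ∑ i ∈ univ.filter (fun i => 2 * p i ≤ q i), m₁ * q i ^ 2
        = m₁ * ∑ i ∈ univ.filter (fun i => 2 * p i ≤ q i), q i ^ 2 := (mul_sum ..).symm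
      _ ≤ m₁ * (4 * (ε ^ 2 / n)) := by
          gcongr
          exact (sum_filter_two_mul_le_sq_le p hq).trans (by linarith)
      _ = 4 * (ε ^ 2 * m₁ / n) := by ring
  have hεm' : ε ^ 2 * m₁ / n ≤ C := by rwa [div_le_iff₀ hn']
  refine ⟨hG, ?_⟩
  calc ∑ i, min (q i ^ 2 / p i) (m₁ * q i ^ 2)
      ≤ ∑ i ∈ univ.filter (fun i => 2 * p i ≤ q i), m₁ * q i ^ 2 + 2 * ∑ i, q i :=
        sum_min_sq_div_le p hq m₁
    _ ≤ 4 * (1 + C) := by linarith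
end
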